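/- Let q ≡ 1 (mod 2ℓ) and let π be a monic irreducible polynomial in F_q[t]. Write r = r̃·π^α with π ∤ r̃. Then for the Gauss sum G_{ℓ,j}(r, π^i): (a) if i ≤ α and ij ≢ 0 (mod ℓ), then G_{ℓ,j}(r, π^i) = 0; (b) if i ≤ α and ij ≡ 0 (mod ℓ), then G_{ℓ,j}(r, π^i) = φ(π^i), the polynomial Euler phi function; (c) if i = α+1 and ij ≡ 0 (mod ℓ), then G_{ℓ,j}(r, π^i) = −q^{(i−1)deg(π)}; (d) if i ≥ α+2, then G_{ℓ,j}(r, π^i) = 0. -/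

import Mathlib

open Polynomial Finset
open scoped Classical

/-- The `ℓ`-th power residue symbol `(a/c)_ℓ` on `𝔽_q[t]`, bundled with its defining
properties: it vanishes off coprime pairs, is multiplicative in the modulus, and on a
monic irreducible modulus `π` it is given by the image under an isomorphism `Ω` (here
`omega`) of the `ℓ`-th roots of unity of `𝔽_q` into `ℂ` of the residue
`a^((q^{deg π} - 1)/ℓ) mod π`. -/
structure ResidueSymbol (Fq : Type) [Field Fq] [Fintype Fq] (ℓ : ℕ) where
  toFun : Polynomial Fq → Polynomial Fq → ℂ
  omega : Fq → ℂ
  omega_mul : ∀ x y : Fq, x ^ ℓ = 1 → y ^ ℓ = 1 → omega (x * y) = omega x * omega y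
  omega_inj : ∀ x y : Fq, x ^ ℓ = 1 → y ^ ℓ = 1 → omega x = omega y → x = y
  omega_pow : ∀ x : Fq, x ^ ℓ = 1 → omega x ^ ℓ = 1
  zero_of_not_coprime : ∀ a c : Polynomial Fq, ¬ IsCoprime a c → toFun a c = 0
  mul_bottom : ∀ a c₁ c₂ : Polynomial Fq, toFun a (c₁ * c₂) = toFun a c₁ * toFun a c₂
  bottom_one : ∀ a : Polynomial Fq, toFun a 1 = 1
  prime_spec : ∀ π a : Polynomial Fq, π.Monic → Irreducible π → IsCoprime a π →
    ∃ α : Fq, α ^ ℓ = 1 ∧ toFun a π = omega α ∧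
      π ∣ a ^ ((Fintype.card Fq ^ π.natDegree - 1) / ℓ) - Polynomial.C α

/-- The Hayes additive character `e_q` on `𝔽_q((1/t))`, restricted to rational functions:
`e_q(b) = ψ(b₁)` where `b₁` is the coefficient of `1/t` in the Laurent expansion of `b`
at infinity and `ψ` is a nontrivial additive character of `𝔽_q`.  The functional `b1`
extracting this coefficient is pinned down by its additivity, its vanishing on
polynomials and on fractions `g/h` with `deg g + 2 ≤ deg h`, and `b1 (a / t) = a`. -/
structure HayesChar (Fq : Type) [Field Fq] [Fintype Fq] where
  toFun : RatFunc Fq → ℂ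
  b1 : RatFunc Fq → Fq
  b1_add : ∀ f g : RatFunc Fq, b1 (f + g) = b1 f + b1 g
  b1_poly : ∀ p : Polynomial Fq, b1 (algebraMap (Polynomial Fq) (RatFunc Fq) p) = 0
  b1_inv : ∀ a : Fq,
    b1 (algebraMap (Polynomial Fq) (RatFunc Fq) (Polynomial.C a) /
      algebraMap (Polynomial Fq) (RatFunc Fq) Polynomial.X) = a
  b1_small : ∀ g h : Polynomial Fq, h ≠ 0 → g.natDegree + 2 ≤ h.natDegree →
    b1 (algebraMap (Polynomial Fq) (RatFunc Fq) g /
      algebraMap (Polynomial Fq) (RatFunc Fq) h) = 0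
  map_add' : ∀ f g : RatFunc Fq, toFun (f + g) = toFun f * toFun g
  map_zero' : toFun 0 = 1
  factors_b1 : ∀ f g : RatFunc Fq, b1 f = b1 g → toFun f = toFun g
  nontrivial' : ∃ f : RatFunc Fq, toFun f ≠ 1

/-- The polynomial `∑ aᵢ tⁱ` of degree `< n` with coefficient tuple `a`; these
parametrize the residues modulo a polynomial of degree `n`. -/
noncomputable def polyOf (Fq : Type) [Field Fq] (n : ℕ) (a : Fin n → Fq) : Polynomial Fq :=
  ∑ i : Fin n, Polynomial.C (a i) * Polynomial.X ^ (i : ℕ)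

/-- The shifted order-`ℓ` Gauss sum `G_{ℓ,j}(r,c) = ∑_{a mod c} (a/c)_ℓ^j e_q(ra/c)`. -/
noncomputable def GaussSum {Fq : Type} [Field Fq] [Fintype Fq] {ℓ : ℕ}
    (χ : ResidueSymbol Fq ℓ) (e : HayesChar Fq) (j : ℕ) (r c : Polynomial Fq) : ℂ :=
  ∑ a : Fin c.natDegree → Fq,
    χ.toFun (polyOf Fq c.natDegree a) c ^ j *
      e.toFun (algebraMap (Polynomial Fq) (RatFunc Fq) (r * polyOf Fq c.natDegree a) /
        algebraMap (Polynomial Fq) (RatFunc Fq) c)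

/-- The Euler phi function for polynomials: the number of residues modulo `c`
coprime to `c`. -/
noncomputable def polyPhi {Fq : Type} [Field Fq] [Fintype Fq] (c : Polynomial Fq) : ℕ :=
  Nat.card {a : Fin c.natDegree → Fq // IsCoprime (polyOf Fq c.natDegree a) c}

/-!
The Gauss sum runs over the residues `a mod π^i`.  If `i ≤ α` then `π^i ∣ r`, the additive
character is trivial, and what remains is the character sum `∑ (a/π)_ℓ^{ij}`: it counts the
units when `ℓ ∣ ij`, and otherwise vanishes, because multiplying `a` by a residue whose symbol
is a primitive `ℓ`-th root of unity (a lift of a generator of the cyclic group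
`(𝔽_q[t]/π)ˣ`) permutes the residues.  If `i > α`, write `a = b + π^{i-α-1}(u + π w)` with
`u` of degree `< deg π`: the additive character only sees `e_q(r̃ u / π)`, a nontrivial
character of `u`.  For `i = α + 1` the residue symbol is the indicator of `u ≠ 0`, leaving
`q^{α deg π} (0 - 1)`; for `i ≥ α + 2` it depends only on `b`, so the sum factors through
`∑_u e_q(r̃ u / π) = 0`.
-/

section PolyOf

variable {Fq : Type} [Field Fq]

theorem polyOf_coeff (n : ℕ) (a : Fin n → Fq) (k : ℕ) :
    (polyOf Fq n a).coeff k = if h : k < n then a ⟨k, h⟩ else 0 := by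
  simp only [polyOf, finsetSum_coeff, coeff_C_mul, coeff_X_pow]
  split_ifs with h
  · rw [Finset.sum_eq_single ⟨k, h⟩
      (fun b _ hb => by simp [show k ≠ b from fun hk => hb (Fin.ext hk.symm)]) (by simp)]
    simp
  · exact Finset.sum_eq_zero fun b _ => by simp [show k ≠ b from fun hk => h (hk ▸ b.isLt)]

theorem degree_polyOf_lt (n : ℕ) (a : Fin n → Fq) : (polyOf Fq n a).degree < n :=
  degree_sum_fin_lt a

theorem polyOf_coeff_eq {n : ℕ} {p : Fq[X]} (hp : p.degree < n) :
    polyOf Fq n (fun k => p.coeff k) = p :=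
  (sum_fin (fun k c => C c * X ^ k) (by simp) hp).trans p.sum_C_mul_X_pow_eq

theorem polyOf_injective (n : ℕ) : Function.Injective (polyOf Fq n) := fun a b hab =>
  funext fun k => by simpa [polyOf_coeff] using congrArg (coeff · k) hab

@[simp]
theorem polyOf_zero (n : ℕ) : polyOf Fq n 0 = 0 := by
  simp [polyOf]

theorem polyOf_add (n : ℕ) (a b : Fin n → Fq) :
    polyOf Fq n (a + b) = polyOf Fq n a + polyOf Fq n b := by
  simp [polyOf, add_mul, Finset.sum_add_distrib]

variable [Fintype Fq]

theorem sum_comp_eq_sum_polyOf_of_injective {ι : Type*} [Fintype ι] {n : ℕ} (P : ι → Fq[X])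
    (hdeg : ∀ x, (P x).degree < n) (hinj : Function.Injective P)
    (hcard : Fintype.card ι = Fintype.card Fq ^ n) (F : Fq[X] → ℂ) :
    ∑ x, F (P x) = ∑ a : Fin n → Fq, F (polyOf Fq n a) := by
  refine Fintype.sum_bijective (fun x (k : Fin n) => (P x).coeff k) ?_ _ _
    fun x => by rw [polyOf_coeff_eq (hdeg x)]
  refine (Fintype.bijective_iff_injective_and_card _).2 ⟨fun x y hxy => hinj ?_, by simp [hcard]⟩
  rw [← polyOf_coeff_eq (hdeg x), ← polyOf_coeff_eq (hdeg y)]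
  exact congrArg (polyOf Fq n) hxy

theorem sum_polyOf_eq_sum_add_mul {g : Fq[X]} (hg : g.Monic) {n₁ : ℕ}
    (hn₁ : g.natDegree = n₁) (n₂ : ℕ) (F : Fq[X] → ℂ) :
    ∑ a : Fin (n₁ + n₂) → Fq, F (polyOf Fq (n₁ + n₂) a)
      = ∑ b : Fin n₂ → Fq, ∑ a : Fin n₁ → Fq, F (polyOf Fq n₁ a + g * polyOf Fq n₂ b) := by
  have hg_deg : g.degree = n₁ := by rw [degree_eq_natDegree hg.ne_zero, hn₁]
  have hdeg (x : (Fin n₁ → Fq) × (Fin n₂ → Fq)) :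
      (polyOf Fq n₁ x.1 + g * polyOf Fq n₂ x.2).degree < (n₁ + n₂ : ℕ) := by
    refine (degree_add_le _ _).trans_lt (max_lt ?_ ?_)
    · exact (degree_polyOf_lt _ _).trans_le (by exact_mod_cast n₁.le_add_right n₂)
    · rw [degree_mul, hg_deg, Nat.cast_add]
      exact WithBot.add_lt_add_left WithBot.coe_ne_bot (degree_polyOf_lt _ _)
  have hinj : Function.Injective
      fun x : (Fin n₁ → Fq) × (Fin n₂ → Fq) => polyOf Fq n₁ x.1 + g * polyOf Fq n₂ x.2 := by
    rintro ⟨a, b⟩ ⟨a', b'⟩ h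
    obtain ⟨hb, ha⟩ := div_modByMonic_unique (polyOf Fq n₂ b) (polyOf Fq n₁ a) hg
      ⟨rfl, hg_deg ▸ degree_polyOf_lt _ _⟩
    obtain ⟨hb', ha'⟩ := div_modByMonic_unique (polyOf Fq n₂ b') (polyOf Fq n₁ a') hg
      ⟨h.symm, hg_deg ▸ degree_polyOf_lt _ _⟩
    exact Prod.ext (polyOf_injective _ (ha.symm.trans ha'))
      (polyOf_injective _ (hb.symm.trans hb'))
  rw [← Fintype.sum_prod_type_right']
  exact (sum_comp_eq_sum_polyOf_of_injective _ hdeg hinj (by simp [pow_add]) F).symm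

theorem sum_polyOf_mul_modByMonic {c a₀ : Fq[X]} (hc : c.Monic) (ha₀ : IsCoprime a₀ c)
    (F : Fq[X] → ℂ) :
    ∑ a : Fin c.natDegree → Fq, F ((a₀ * polyOf Fq c.natDegree a) %ₘ c)
      = ∑ a : Fin c.natDegree → Fq, F (polyOf Fq c.natDegree a) := by
  have hc_deg : c.degree = c.natDegree := degree_eq_natDegree hc.ne_zero
  refine sum_comp_eq_sum_polyOf_of_injective _ (fun a => hc_deg ▸ degree_modByMonic_lt _ hc)
    (fun a b hab => polyOf_injective _ ?_) (by simp) F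
  have hdvd : c ∣ a₀ * (polyOf Fq _ a - polyOf Fq _ b) := by
    rw [← modByMonic_eq_zero_iff_dvd hc, mul_sub, sub_modByMonic, sub_eq_zero]
    exact hab
  refine sub_eq_zero.1 (eq_zero_of_dvd_of_degree_lt (ha₀.symm.dvd_of_dvd_mul_left hdvd) ?_)
  exact hc_deg ▸ (degree_sub_le _ _).trans_lt
    (max_lt (degree_polyOf_lt _ _) (degree_polyOf_lt _ _))

end PolyOf

namespace HayesChar

variable {Fq : Type} [Field Fq] [Fintype Fq] (e : HayesChar Fq)

noncomputable def frac (g c : Fq[X]) : ℂ :=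
  e.toFun (algebraMap Fq[X] (RatFunc Fq) g / algebraMap Fq[X] (RatFunc Fq) c)

theorem toFun_algebraMap (p : Fq[X]) : e.toFun (algebraMap Fq[X] (RatFunc Fq) p) = 1 := by
  rw [e.factors_b1 _ 0 (by simpa using (e.b1_poly p).trans (e.b1_poly 0).symm), e.map_zero']

theorem frac_add_left (g h c : Fq[X]) : e.frac (g + h) c = e.frac g c * e.frac h c := by
  simp only [frac, map_add, add_div, e.map_add']

theorem frac_of_dvd {g c : Fq[X]} (h : c ∣ g) : e.frac g c = 1 := by
  obtain ⟨q, rfl⟩ := h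
  rcases eq_or_ne c 0 with rfl | hc
  · simp [frac, e.map_zero']
  · rw [frac, map_mul, mul_div_cancel_left₀ _ (RatFunc.algebraMap_ne_zero hc),
      toFun_algebraMap]

theorem frac_congr {g h c : Fq[X]} (hgh : c ∣ g - h) : e.frac g c = e.frac h c := by
  rw [← sub_add_cancel g h, frac_add_left, e.frac_of_dvd hgh, one_mul]

theorem frac_mul_mul_left {b : Fq[X]} (hb : b ≠ 0) (g c : Fq[X]) :
    e.frac (b * g) (b * c) = e.frac g c := by
  rw [frac, map_mul, map_mul, mul_div_mul_left _ _ (RatFunc.algebraMap_ne_zero hb), frac]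

/-- The character `ψ` with `e_q = ψ ∘ b₁`. -/
noncomputable def psi : AddChar Fq ℂ where
  toFun x := e.frac (C x) X
  map_zero_eq_one' := by simp [frac_of_dvd]
  map_add_eq_mul' x y := by rw [C_add, frac_add_left]

theorem psi_ne_one : e.psi ≠ 1 := by
  obtain ⟨f, hf⟩ := e.nontrivial'
  refine fun h => hf ?_
  rw [e.factors_b1 f _ (e.b1_inv (e.b1 f)).symm]
  exact DFunLike.congr_fun h (e.b1 f)

theorem frac_C_mul_X_pow {π : Fq[X]} (hπ : π.Monic) (hd : 0 < π.natDegree) (x : Fq) :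
    e.frac (C x * X ^ (π.natDegree - 1)) π = e.psi x := by
  set d := π.natDegree
  have hπ0 : π ≠ 0 := hπ.ne_zero
  let A := algebraMap Fq[X] (RatFunc Fq)
  have hsplit :
      A (C x * X ^ (d - 1)) / A π = A (C x) / A X + A (C x * (X ^ d - π)) / A (X * π) := by
    have hX : (X : Fq[X]) ^ d = X * X ^ (d - 1) := by rw [← pow_succ', Nat.sub_add_cancel hd]
    have : A π ≠ 0 := RatFunc.algebraMap_ne_zero hπ0
    have : A X ≠ 0 := RatFunc.algebraMap_ne_zero X_ne_zero
    simp only [map_mul, map_sub, hX, map_pow]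
    field_simp
    ring
  have hlow : (C x * (X ^ d - π)).natDegree + 2 ≤ (X * π).natDegree := by
    have := (isMonicOfDegree_X_pow (R := Fq) d).natDegree_sub_lt hd.ne' ⟨rfl, hπ⟩
    rw [natDegree_mul X_ne_zero hπ0, natDegree_X]
    have := natDegree_C_mul_le x (X ^ d - π)
    omega
  refine e.factors_b1 _ _ ?_
  rw [hsplit, e.b1_add, e.b1_small _ _ (mul_ne_zero X_ne_zero hπ0) hlow, add_zero]

/-- `v ↦ e_q(r̃ v / π)` is a nontrivial additive character on the residues of degree `< n`:
it takes the value `ψ(x)` at `v ≡ r̃⁻¹ x t^{deg π - 1} (mod π)`. -/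
theorem sum_frac_mul_polyOf_eq_zero {π rt : Fq[X]} (hπm : π.Monic) (hπ : Irreducible π)
    (hrt : ¬π ∣ rt) {n : ℕ} (hn : π.natDegree ≤ n) :
    ∑ v : Fin n → Fq, e.frac (rt * polyOf Fq n v) π = 0 := by
  let φ : AddChar (Fin n → Fq) ℂ :=
    { toFun v := e.frac (rt * polyOf Fq n v) π
      map_zero_eq_one' := by simp [frac_of_dvd]
      map_add_eq_mul' v w := by rw [polyOf_add, mul_add, frac_add_left] }
  refine AddChar.sum_eq_zero_of_ne_one (ψ := φ) fun hφ => e.psi_ne_one (AddChar.ext _ _ fun x => ?_)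
  obtain ⟨s, t, hst⟩ := (hπ.coprime_iff_not_dvd.2 hrt).symm
  set y := s * C x * X ^ (π.natDegree - 1) with hy
  have hdeg : (y %ₘ π).degree < n :=
    (degree_modByMonic_lt y hπm).trans_le ((degree_le_natDegree).trans (by exact_mod_cast hn))
  have hφy := DFunLike.congr_fun hφ fun k : Fin n => (y %ₘ π).coeff k
  change e.frac (rt * polyOf Fq n _) π = 1 at hφy
  rw [polyOf_coeff_eq hdeg] at hφy
  rw [AddChar.one_apply, ← hφy, ← e.frac_C_mul_X_pow hπm hπ.natDegree_pos]
  refine e.frac_congr ⟨t * C x * X ^ (π.natDegree - 1) + rt * (y /ₘ π), ?_⟩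
  rw [modByMonic_eq_sub_mul_div y π]
  linear_combination -(C x * X ^ (π.natDegree - 1)) * hst - rt * hy

end HayesChar

theorem Polynomial.eq_of_dvd_C_sub_C {K : Type*} [Field K] {π : K[X]} (hπ : ¬IsUnit π)
    {x y : K} (h : π ∣ C x - C y) : x = y := by
  by_contra hxy
  rw [← C_sub] at h
  exact hπ (isUnit_of_dvd_unit h (isUnit_C.2 (sub_ne_zero.2 hxy).isUnit))

theorem Irreducible.isCoprime_iff_not_dvd_left {R : Type*} [CommRing R] [IsBezout R]
    {π a : R} (hπ : Irreducible π) : IsCoprime a π ↔ ¬π ∣ a :=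
  isCoprime_comm.trans hπ.coprime_iff_not_dvd

/-- Take for `a` a lift of a generator of the cyclic group `(𝔽_q[t]/π)ˣ`. -/
theorem exists_isCoprime_forall_dvd_pow_sub_C {Fq : Type} [Field Fq] [Fintype Fq] {π : Fq[X]}
    (hπm : π.Monic) (hπ : Irreducible π) {ℓ : ℕ}
    (hℓ_dvd : ℓ ∣ Fintype.card Fq ^ π.natDegree - 1) :
    ∃ a : Fq[X], IsCoprime a π ∧ ∀ (x : Fq) (k : ℕ),
      π ∣ a ^ ((Fintype.card Fq ^ π.natDegree - 1) / ℓ) - C x → x ^ k = 1 → ℓ ∣ k := by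
  have : Fact (Irreducible π) := ⟨hπ⟩
  set N := Fintype.card Fq ^ π.natDegree - 1
  set m := N / ℓ
  let : Fintype (AdjoinRoot π) :=
    Module.fintypeOfFintype (AdjoinRoot.powerBasis hπm.ne_zero).basis
  have hcard : Fintype.card (AdjoinRoot π) = Fintype.card Fq ^ π.natDegree := by
    rw [Module.card_fintype (AdjoinRoot.powerBasis hπm.ne_zero).basis, Fintype.card_fin,
      AdjoinRoot.powerBasis_dim]
  obtain ⟨g, hg⟩ := IsCyclic.exists_generator (α := (AdjoinRoot π)ˣ)
  have horder : orderOf g = N := by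
    rw [orderOf_eq_card_of_forall_mem_zpowers hg, Nat.card_eq_fintype_card,
      Fintype.card_units, hcard]
  have hmℓ : m * ℓ = N := Nat.div_mul_cancel hℓ_dvd
  have hm : 0 < m := Nat.pos_of_ne_zero fun h => by
    have := Nat.one_lt_pow hπ.natDegree_pos.ne' (Fintype.one_lt_card (α := Fq))
    rw [h, zero_mul] at hmℓ
    omega
  obtain ⟨a, ha⟩ := AdjoinRoot.mk_surjective (g : AdjoinRoot π)
  refine ⟨a, hπ.isCoprime_iff_not_dvd_left.2 fun h => g.ne_zero ?_, fun x k hx hxk => ?_⟩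
  · rw [← ha, AdjoinRoot.mk_eq_zero.2 h]
  have hgm : (g : AdjoinRoot π) ^ m = AdjoinRoot.of π x := by
    rw [← ha, ← map_pow, AdjoinRoot.of, ← sub_eq_zero]
    exact AdjoinRoot.mk_eq_zero.2 hx
  have hgmk : g ^ (m * k) = 1 := Units.ext <| by
    rw [Units.val_pow_eq_pow_val, pow_mul, hgm, ← map_pow, hxk, map_one, Units.val_one]
  have := orderOf_dvd_of_pow_eq_one hgmk
  rw [horder, ← hmℓ] at this
  exact Nat.dvd_of_mul_dvd_mul_left hm this

namespace ResidueSymbol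

variable {Fq : Type} [Field Fq] [Fintype Fq] {ℓ : ℕ} (χ : ResidueSymbol Fq ℓ)

theorem omega_one (hℓ : 0 < ℓ) : χ.omega 1 = 1 := by
  have h1 : (1 : Fq) ^ ℓ = 1 := one_pow ℓ
  have hne : χ.omega 1 ≠ 0 := fun h => by simpa [h, zero_pow hℓ.ne'] using χ.omega_pow 1 h1
  simpa [hne] using χ.omega_mul 1 1 h1 h1

theorem omega_pow_of_pow_eq_one (hℓ : 0 < ℓ) {x : Fq} (hx : x ^ ℓ = 1) (k : ℕ) :
    χ.omega (x ^ k) = χ.omega x ^ k := by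
  induction k with
  | zero => simp [χ.omega_one hℓ]
  | succ k ih =>
    rw [pow_succ, χ.omega_mul _ _ (by rw [← pow_mul, mul_comm, pow_mul, hx, one_pow]) hx, ih,
      pow_succ]

theorem toFun_pow_right (a c : Fq[X]) (i : ℕ) : χ.toFun a (c ^ i) = χ.toFun a c ^ i := by
  induction i with
  | zero => simp [χ.bottom_one]
  | succ i ih => rw [pow_succ, χ.mul_bottom, ih, pow_succ]

variable {π : Fq[X]}

theorem toFun_eq_omega (hπm : π.Monic) (hπ : Irreducible π) {a : Fq[X]} (ha : IsCoprime a π)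
    {x : Fq} (h : π ∣ a ^ ((Fintype.card Fq ^ π.natDegree - 1) / ℓ) - C x) :
    χ.toFun a π = χ.omega x := by
  obtain ⟨ν, -, hν, hνdvd⟩ := χ.prime_spec π a hπm hπ ha
  have := dvd_sub h hνdvd
  rw [sub_sub_sub_cancel_left] at this
  rw [hν, eq_of_dvd_C_sub_C hπ.not_isUnit this]

theorem toFun_congr (hπm : π.Monic) (hπ : Irreducible π) {a b : Fq[X]} (h : π ∣ a - b) :
    χ.toFun a π = χ.toFun b π := by
  have hcop : IsCoprime a π ↔ IsCoprime b π := by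
    rw [hπ.isCoprime_iff_not_dvd_left, hπ.isCoprime_iff_not_dvd_left, dvd_iff_dvd_of_dvd_sub h]
  by_cases hb : IsCoprime b π
  · obtain ⟨ν, -, hν, hνdvd⟩ := χ.prime_spec π b hπm hπ hb
    have := (h.trans (sub_dvd_pow_sub_pow a b ((Fintype.card Fq ^ π.natDegree - 1) / ℓ))).add hνdvd
    rw [sub_add_sub_cancel] at this
    rw [hν, χ.toFun_eq_omega hπm hπ (hcop.2 hb) this]
  · rw [χ.zero_of_not_coprime _ _ (mt hcop.1 hb), χ.zero_of_not_coprime _ _ hb]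

theorem toFun_mul_left (hπm : π.Monic) (hπ : Irreducible π) (a b : Fq[X]) :
    χ.toFun (a * b) π = χ.toFun a π * χ.toFun b π := by
  set m := (Fintype.card Fq ^ π.natDegree - 1) / ℓ
  by_cases hab : IsCoprime (a * b) π
  · obtain ⟨ha, hb⟩ := IsCoprime.mul_left_iff.1 hab
    obtain ⟨νa, hνa1, hνa, hνa_dvd⟩ := χ.prime_spec π a hπm hπ ha
    obtain ⟨νb, hνb1, hνb, hνb_dvd⟩ := χ.prime_spec π b hπm hπ hb
    rw [hνa, hνb, ← χ.omega_mul _ _ hνa1 hνb1, χ.toFun_eq_omega hπm hπ hab]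
    convert (hνa_dvd.mul_right (b ^ m)).add (hνb_dvd.mul_left (C νa)) using 1
    rw [mul_pow, C_mul]
    ring
  · rw [χ.zero_of_not_coprime _ _ hab]
    rcases not_and_or.1 (mt IsCoprime.mul_left_iff.2 hab) with h | h <;>
      simp [χ.zero_of_not_coprime _ _ h]

theorem toFun_pow_eq_one (hπm : π.Monic) (hπ : Irreducible π) {a : Fq[X]}
    (ha : IsCoprime a π) : χ.toFun a π ^ ℓ = 1 := by
  obtain ⟨ν, hν1, hν, -⟩ := χ.prime_spec π a hπm hπ ha
  rw [hν, χ.omega_pow ν hν1]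

theorem toFun_pow_pow_of_dvd (hπm : π.Monic) (hπ : Irreducible π) {i j : ℕ} (hj : 0 < j)
    (hij : ℓ ∣ i * j) (a : Fq[X]) :
    χ.toFun a (π ^ i) ^ j = if IsCoprime a (π ^ i) then 1 else 0 := by
  rcases i.eq_zero_or_pos with rfl | hi
  · simp [χ.bottom_one, isCoprime_one_right]
  rw [IsCoprime.pow_right_iff hi, χ.toFun_pow_right, ← pow_mul]
  split_ifs with ha
  · obtain ⟨k, hk⟩ := hij
    rw [hk, pow_mul, χ.toFun_pow_eq_one hπm hπ ha, one_pow]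
  · rw [χ.zero_of_not_coprime _ _ ha, zero_pow (Nat.mul_pos hi hj).ne']

theorem exists_toFun_pow_ne_one (hℓ : 0 < ℓ) (hq : Fintype.card Fq ≡ 1 [MOD ℓ])
    (hπm : π.Monic) (hπ : Irreducible π) {k : ℕ} (hk : ¬ℓ ∣ k) :
    ∃ a : Fq[X], IsCoprime a π ∧ χ.toFun a π ^ k ≠ 1 := by
  have hdvd : ℓ ∣ Fintype.card Fq ^ π.natDegree - 1 :=
    (Nat.modEq_iff_dvd' (Nat.one_le_pow _ _ Fintype.card_pos)).1 (by simpa using (hq.pow _).symm)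
  obtain ⟨a, ha, hord⟩ := exists_isCoprime_forall_dvd_pow_sub_C hπm hπ hdvd
  obtain ⟨ν, hν1, hν, hνdvd⟩ := χ.prime_spec π a hπm hπ ha
  refine ⟨a, ha, fun h => hk (hord ν k hνdvd ?_)⟩
  rw [hν, ← χ.omega_pow_of_pow_eq_one hℓ hν1, ← χ.omega_one hℓ] at h
  exact χ.omega_inj _ _ (by rw [← pow_mul, mul_comm, pow_mul, hν1, one_pow]) (one_pow ℓ) h

end ResidueSymbol

section GaussSum

variable {Fq : Type} [Field Fq] [Fintype Fq] {ℓ : ℕ} (χ : ResidueSymbol Fq ℓ)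
  (e : HayesChar Fq) (j : ℕ)

theorem gaussSum_eq_sum (r c : Fq[X]) {n : ℕ} (hn : c.natDegree = n) :
    GaussSum χ e j r c
      = ∑ a : Fin n → Fq, χ.toFun (polyOf Fq n a) c ^ j * e.frac (r * polyOf Fq n a) c := by
  subst hn
  rfl

theorem gaussSum_of_dvd {r c : Fq[X]} (h : c ∣ r) :
    GaussSum χ e j r c = ∑ a : Fin c.natDegree → Fq, χ.toFun (polyOf Fq c.natDegree a) c ^ j := by
  simp only [gaussSum_eq_sum χ e j r c rfl, e.frac_of_dvd (h.mul_right _), mul_one]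

theorem gaussSum_primePow_eq_zero_of_dvd_of_not_dvd (hℓ : 0 < ℓ)
    (hq : Fintype.card Fq ≡ 1 [MOD ℓ]) {π r : Fq[X]} (hπm : π.Monic) (hπ : Irreducible π)
    {i : ℕ} (hr : π ^ i ∣ r) (hij : ¬ℓ ∣ i * j) :
    GaussSum χ e j r (π ^ i) = 0 := by
  have hi : i ≠ 0 := fun h => hij (by simp [h])
  obtain ⟨a₀, ha₀, hζ⟩ := χ.exists_toFun_pow_ne_one hℓ hq hπm hπ hij
  have hmul (p : Fq[X]) : χ.toFun ((a₀ * p) %ₘ π ^ i) (π ^ i) ^ j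
      = χ.toFun a₀ π ^ (i * j) * χ.toFun p (π ^ i) ^ j := by
    have hcongr : π ∣ (a₀ * p) %ₘ π ^ i - a₀ * p :=
      (dvd_pow_self π hi).trans ⟨-(a₀ * p /ₘ π ^ i), by rw [modByMonic_eq_sub_mul_div]; ring⟩
    simp only [χ.toFun_pow_right, ← pow_mul, χ.toFun_congr hπm hπ hcongr,
      χ.toFun_mul_left hπm hπ, mul_pow]
  have hsum := sum_polyOf_mul_modByMonic (hπm.pow i) ha₀.pow_right
    fun p => χ.toFun p (π ^ i) ^ j
  simp only [hmul, ← Finset.mul_sum] at hsum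
  rw [gaussSum_of_dvd χ e j hr]
  by_contra hS
  exact hζ ((mul_eq_right₀ hS).1 hsum)

theorem gaussSum_primePow_eq_polyPhi_of_dvd {π r : Fq[X]} (hπm : π.Monic) (hπ : Irreducible π)
    {i : ℕ} (hj : 0 < j) (hr : π ^ i ∣ r) (hij : ℓ ∣ i * j) :
    GaussSum χ e j r (π ^ i) = polyPhi (π ^ i) := by
  simp only [gaussSum_of_dvd χ e j hr, χ.toFun_pow_pow_of_dvd hπm hπ hj hij, Finset.sum_boole,
    polyPhi, Nat.card_eq_fintype_card, Fintype.card_subtype]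

theorem gaussSum_primePow_succ {π rt : Fq[X]} (hπm : π.Monic) (hπ : Irreducible π)
    (hrt : ¬π ∣ rt) (hj : 0 < j) {α : ℕ} (hij : ℓ ∣ (α + 1) * j) :
    GaussSum χ e j (rt * π ^ α) (π ^ (α + 1))
      = -(Fintype.card Fq : ℂ) ^ (α * π.natDegree) := by
  set d := π.natDegree
  have hterm (u : Fin d → Fq) (w : Fin (α * d) → Fq) :
      χ.toFun (polyOf Fq d u + π * polyOf Fq (α * d) w) (π ^ (α + 1)) ^ j
        * e.frac (rt * π ^ α * (polyOf Fq d u + π * polyOf Fq (α * d) w)) (π ^ (α + 1))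
      = e.frac (rt * polyOf Fq d u) π - if u = 0 then 1 else 0 := by
    have hfrac : e.frac (rt * π ^ α * (polyOf Fq d u + π * polyOf Fq (α * d) w)) (π ^ (α + 1))
        = e.frac (rt * polyOf Fq d u) π := by
      rw [pow_succ, mul_comm rt, mul_assoc, e.frac_mul_mul_left (pow_ne_zero _ hπm.ne_zero)]
      exact e.frac_congr ⟨rt * polyOf Fq (α * d) w, by ring⟩
    rw [χ.toFun_pow_pow_of_dvd hπm hπ hj hij, hfrac, IsCoprime.pow_right_iff α.succ_pos,
      hπ.isCoprime_iff_not_dvd_left, dvd_add_left (dvd_mul_right π _)]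
    rcases eq_or_ne u 0 with rfl | hu
    · simp [e.frac_of_dvd]
    · have hdeg : (polyOf Fq d u).degree < π.degree :=
        degree_eq_natDegree hπm.ne_zero ▸ degree_polyOf_lt _ _
      have : ¬π ∣ polyOf Fq d u := fun h =>
        hu (polyOf_injective _ (by rw [eq_zero_of_dvd_of_degree_lt h hdeg, polyOf_zero]))
      simp [this, hu]
  rw [gaussSum_eq_sum χ e j _ _ (by rw [natDegree_pow, add_mul, one_mul, add_comm]),
    sum_polyOf_eq_sum_add_mul hπm (n₁ := d) rfl (α * d)
      fun p => χ.toFun p (π ^ (α + 1)) ^ j * e.frac (rt * π ^ α * p) (π ^ (α + 1))]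
  simp only [hterm, Finset.sum_sub_distrib,
    e.sum_frac_mul_polyOf_eq_zero hπm hπ hrt (n := d) le_rfl,
    Fintype.sum_ite_eq', Finset.sum_const, Finset.card_univ, Fintype.card_fun, Fintype.card_fin]
  simp

theorem gaussSum_primePow_eq_zero_of_add_two_le {π rt : Fq[X]} (hπm : π.Monic)
    (hπ : Irreducible π) (hrt : ¬π ∣ rt) {α i : ℕ} (hi : α + 2 ≤ i) :
    GaussSum χ e j (rt * π ^ α) (π ^ i) = 0 := by
  obtain ⟨k, hk, rfl⟩ : ∃ k, 0 < k ∧ i = k + (α + 1) := ⟨i - (α + 1), by omega, by omega⟩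
  set d := π.natDegree
  have hπ0 := hπm.ne_zero
  have hterm (b : Fin (k * d) → Fq) (v : Fin ((α + 1) * d) → Fq) :
      χ.toFun (polyOf Fq (k * d) b + π ^ k * polyOf Fq ((α + 1) * d) v) (π ^ (k + (α + 1))) ^ j
        * e.frac (rt * π ^ α * (polyOf Fq (k * d) b + π ^ k * polyOf Fq ((α + 1) * d) v))
          (π ^ (k + (α + 1)))
      = χ.toFun (polyOf Fq (k * d) b) (π ^ (k + (α + 1))) ^ j
          * e.frac (rt * polyOf Fq (k * d) b) (π ^ (k + 1))
          * e.frac (rt * polyOf Fq ((α + 1) * d) v) π := by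
    have hχ : χ.toFun (polyOf Fq (k * d) b + π ^ k * polyOf Fq ((α + 1) * d) v) π
        = χ.toFun (polyOf Fq (k * d) b) π := by
      refine χ.toFun_congr hπm hπ ?_
      rw [add_sub_cancel_left]
      exact (dvd_pow_self π hk.ne').mul_right _
    have hsplit : rt * π ^ α * (polyOf Fq (k * d) b + π ^ k * polyOf Fq ((α + 1) * d) v)
        = π ^ α * (rt * polyOf Fq (k * d) b + π ^ k * (rt * polyOf Fq ((α + 1) * d) v)) := by
      ring
    rw [χ.toFun_pow_right, hχ, ← χ.toFun_pow_right, hsplit,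
      show π ^ (k + (α + 1)) = π ^ α * (π ^ k * π) by ring,
      e.frac_mul_mul_left (pow_ne_zero _ hπ0), e.frac_add_left,
      e.frac_mul_mul_left (pow_ne_zero _ hπ0), ← pow_succ]
    ring
  rw [gaussSum_eq_sum χ e j _ _ (by rw [natDegree_pow, add_mul]),
    sum_polyOf_eq_sum_add_mul (hπm.pow k) (n₁ := k * d) (natDegree_pow π k) ((α + 1) * d)
      fun p => χ.toFun p (π ^ (k + (α + 1))) ^ j * e.frac (rt * π ^ α * p) (π ^ (k + (α + 1)))]
  simp only [hterm, ← Finset.sum_mul, ← Finset.mul_sum,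
    e.sum_frac_mul_polyOf_eq_zero hπm hπ hrt (Nat.le_mul_of_pos_left d α.succ_pos), mul_zero]

end GaussSum

/-- Values of the shifted Gauss sum `G_{ℓ,j}(r, π^i)` for a monic
irreducible `π`, where `r = r̃ π^α` with `π ∤ r̃`:
(a) if `i ≤ α` and `ij ≢ 0 (mod ℓ)` it vanishes;
(b) if `i ≤ α` and `ij ≡ 0 (mod ℓ)` it equals `φ(π^i)`;
(c) if `i = α + 1` and `ij ≡ 0 (mod ℓ)` it equals `-q^{(i-1) deg π}`;
(d) if `i ≥ α + 2` it vanishes. -/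
theorem gaussSum_primePow {Fq : Type} [Field Fq] [Fintype Fq] (ℓ : ℕ) (hℓ : 2 ≤ ℓ)
    (hq : Fintype.card Fq % (2 * ℓ) = 1)
    (χ : ResidueSymbol Fq ℓ) (e : HayesChar Fq) (j : ℕ) (hj : 0 < j)
    (π rt : Polynomial Fq) (α : ℕ) (hπm : π.Monic) (hπ : Irreducible π)
    (hrt : ¬ π ∣ rt) (i : ℕ) :
    (i ≤ α → ¬ (ℓ ∣ i * j) → GaussSum χ e j (rt * π ^ α) (π ^ i) = 0) ∧
    (i ≤ α → ℓ ∣ i * j →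
      GaussSum χ e j (rt * π ^ α) (π ^ i) = (polyPhi (π ^ i) : ℂ)) ∧
    (i = α + 1 → ℓ ∣ i * j →
      GaussSum χ e j (rt * π ^ α) (π ^ i)
        = - (Fintype.card Fq : ℂ) ^ ((i - 1) * π.natDegree)) ∧
    (α + 2 ≤ i → GaussSum χ e j (rt * π ^ α) (π ^ i) = 0) := by
  have hq' : Fintype.card Fq ≡ 1 [MOD ℓ] :=
    Nat.ModEq.of_mul_left 2 (hq ▸ (Nat.mod_modEq _ _).symm)
  have hdvd {i : ℕ} (hi : i ≤ α) : π ^ i ∣ rt * π ^ α := (pow_dvd_pow π hi).mul_left rt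
  refine ⟨fun hi hij => ?_, fun hi hij => ?_, ?_, fun hi => ?_⟩
  · exact gaussSum_primePow_eq_zero_of_dvd_of_not_dvd χ e j (by omega) hq' hπm hπ (hdvd hi) hij
  · exact gaussSum_primePow_eq_polyPhi_of_dvd χ e j hπm hπ hj (hdvd hi) hij
  · rintro rfl hij
    simpa using gaussSum_primePow_succ χ e j hπm hπ hrt hj hij
  · exact gaussSum_primePow_eq_zero_of_add_two_le χ e j hπm hπ hrt hi
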